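/- Let k be a positive integer and ζ a real number. Then λ̂_k(ζ) ≤ max{1/k, 1/λ_1(ζ)} (with the convention 1/∞ = 0 when λ_1(ζ) = ∞). -/

import Mathlib

/-- Distance from a real number to the nearest integer. -/
noncomputable def distNearestInt (a : ℝ) : ℝ := |a - round a|

/-- `max_{1 ≤ j ≤ k} ‖ζ^j x‖` for a positive integer `x`. -/
noncomputable def maxDist (k : ℕ) (ζ : ℝ) (x : ℕ) : ℝ :=
  ⨆ j ∈ Finset.Icc 1 k, distNearestInt (ζ ^ j * x)

/-- The approximation constant `λ_k(ζ)`, as an extended real number in `[0,∞]`. -/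
noncomputable def lambdaConst (k : ℕ) (ζ : ℝ) : EReal :=
  sSup (insert (0 : EReal) {e : EReal | ∃ η : ℝ, e = (η : EReal) ∧
    {x : ℕ | 0 < x ∧ 0 < maxDist k ζ x ∧ maxDist k ζ x ≤ (x : ℝ) ^ (-η)}.Infinite})

/-- The uniform approximation constant `λ̂_k(ζ)`, as an extended real number in `[0,∞]`. -/
noncomputable def lambdaHatConst (k : ℕ) (ζ : ℝ) : EReal :=
  sSup (insert (0 : EReal) {e : EReal | ∃ η : ℝ, e = (η : EReal) ∧
    ∃ X₀ : ℝ, ∀ X : ℝ, X₀ ≤ X → ∃ x : ℕ, 1 ≤ x ∧ (x : ℝ) ≤ X ∧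
      0 < maxDist k ζ x ∧ maxDist k ζ x ≤ X ^ (-η)})

/-- The dual approximation constant `w_k(ζ)`, as an extended real number in `[0,∞]`. -/
noncomputable def wConst (k : ℕ) (ζ : ℝ) : EReal :=
  sSup (insert (0 : EReal) {e : EReal | ∃ ν : ℝ, e = (ν : EReal) ∧
    ∀ X₀ : ℝ, ∃ X : ℝ, X₀ ≤ X ∧ ∃ p : Fin (k + 1) → ℤ,
      (∀ j, |(p j : ℝ)| ≤ X) ∧
      0 < |∑ j : Fin (k + 1), ζ ^ (j : ℕ) * (p j : ℝ)| ∧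
      |∑ j : Fin (k + 1), ζ ^ (j : ℕ) * (p j : ℝ)| ≤ X ^ (-ν)})

/-- The uniform dual approximation constant `ŵ_k(ζ)`, as an extended real number in `[0,∞]`. -/
noncomputable def wHatConst (k : ℕ) (ζ : ℝ) : EReal :=
  sSup (insert (0 : EReal) {e : EReal | ∃ ν : ℝ, e = (ν : EReal) ∧
    ∃ X₀ : ℝ, ∀ X : ℝ, X₀ ≤ X → ∃ p : Fin (k + 1) → ℤ,
      (∀ j, |(p j : ℝ)| ≤ X) ∧
      0 < |∑ j : Fin (k + 1), ζ ^ (j : ℕ) * (p j : ℝ)| ∧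
      |∑ j : Fin (k + 1), ζ ^ (j : ℕ) * (p j : ℝ)| ≤ X ^ (-ν)})

/-!
If `η > 1/k` is a uniform exponent for `ζ`, then `ζ` is irrational (for `ζ = c/d` every nonzero
`‖ζ^j x‖` with `j ≤ k` is at least `d^{-k}`), and `λ₁(ζ) ≥ η > 0`. Now let `‖ζ y‖ ≤ y^{-ν}` for
infinitely many `y`, with `ν > 1/η`, and pick `1/η < θ < min(ν, k)`. Reducing `round(ζ y)/y` gives
fractions `a/b` in lowest terms with `b` arbitrarily large and `|ζ - a/b| ≤ b^{-1-ν}`. The uniform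
property at `X = b^θ` gives `1 ≤ x ≤ b^θ` with `‖ζ^j x‖ ≤ b^{-θη}` for `j ≤ k`. Since `θη > 1` and
`θ < ν`, for large `b` the integer multiple `(a/b)^j x` of `1/b` lies within `1/b` of an integer, so
by induction on `j` (using `gcd(a, b) = 1`) `b^j ∣ x`. Then `b^k ≤ x ≤ b^θ < b^k`, a contradiction.
Hence `λ₁(ζ) ≤ 1/η`, i.e. `η ≤ 1/λ₁(ζ)`.
-/

open Filter

section distNearestInt

lemma distNearestInt_nonneg (a : ℝ) : 0 ≤ distNearestInt a := abs_nonneg _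

lemma distNearestInt_le_abs_sub_intCast (a : ℝ) (m : ℤ) : distNearestInt a ≤ |a - m| :=
  round_le a m

lemma distNearestInt_le_add_abs_sub (u v : ℝ) :
    distNearestInt v ≤ distNearestInt u + |v - u| :=
  calc distNearestInt v ≤ |v - round u| := distNearestInt_le_abs_sub_intCast v _
    _ ≤ |v - u| + |u - round u| := abs_sub_le _ _ _
    _ = distNearestInt u + |v - u| := add_comm _ _

lemma Irrational.distNearestInt_pos {a : ℝ} (h : Irrational a) : 0 < distNearestInt a :=
  abs_pos.2 (sub_ne_zero.2 (h.ne_int _))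

lemma natCast_dvd_of_distNearestInt_div_lt {A : ℤ} {b : ℕ} (hb : 0 < b)
    (h : distNearestInt (A / b) < 1 / b) : (b : ℤ) ∣ A := by
  have hb' : (0 : ℝ) < b := by exact_mod_cast hb
  set n := round ((A : ℝ) / b)
  have hsmall : |((A - n * b : ℤ) : ℝ)| < 1 := by
    have hscale : |((A - n * b : ℤ) : ℝ)| = distNearestInt (A / b) * b := by
      rw [distNearestInt, ← abs_of_pos hb', ← abs_mul, abs_of_pos hb']
      push_cast
      congr 1
      field_simp
      ring
    rw [hscale]
    calc distNearestInt (A / b) * b < 1 / b * b := mul_lt_mul_of_pos_right h hb'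
      _ = 1 := by field_simp
  have hzero : A - n * b = 0 := Int.abs_lt_one_iff.1 (by exact_mod_cast hsmall)
  exact ⟨n, by linarith⟩

lemma one_div_le_distNearestInt_div {A : ℤ} {b : ℕ} (h : 0 < distNearestInt (A / b)) :
    1 / b ≤ distNearestInt (A / b) := by
  rcases Nat.eq_zero_or_pos b with rfl | hb
  · simpa using h.le
  by_contra! hlt
  obtain ⟨n, rfl⟩ := natCast_dvd_of_distNearestInt_div_lt hb hlt
  have hb' : (b : ℝ) ≠ 0 := by positivity
  simp [distNearestInt, hb'] at h

lemma Irrational.exists_pos_le_distNearestInt_mul {ζ : ℝ} (h : Irrational ζ) (N : ℕ) :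
    ∃ ε > 0, ∀ n : ℕ, 0 < n → n ≤ N → ε ≤ distNearestInt (ζ * n) := by
  induction N with
  | zero => exact ⟨1, one_pos, fun n hn hnN => by omega⟩
  | succ N ih =>
    obtain ⟨ε, hε, hle⟩ := ih
    refine ⟨min ε (distNearestInt (ζ * (N + 1 : ℕ))),
      lt_min hε (h.mul_natCast N.succ_ne_zero).distNearestInt_pos, fun n hn hnN => ?_⟩
    rcases Nat.lt_or_eq_of_le hnN with hlt | rfl
    · exact (min_le_left _ _).trans (hle n hn (by omega))
    · exact min_le_right _ _

end distNearestInt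

section maxDist

variable {k : ℕ} {ζ : ℝ} {x : ℕ}

lemma distNearestInt_le_maxDist {j : ℕ} (hj : j ∈ Finset.Icc 1 k) :
    distNearestInt (ζ ^ j * x) ≤ maxDist k ζ x := by
  have hbdd : BddAbove (Set.range fun i => ⨆ _ : i ∈ Finset.Icc 1 k,
      distNearestInt (ζ ^ i * x)) :=
    ⟨1 / 2, Set.forall_mem_range.2 fun i =>
      Real.iSup_le (fun _ => abs_sub_round _) (by norm_num)⟩
  have h := le_ciSup hbdd j
  rw [ciSup_pos hj] at h
  exact h

lemma maxDist_le {c : ℝ} (hc : 0 ≤ c)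
    (h : ∀ j ∈ Finset.Icc 1 k, distNearestInt (ζ ^ j * x) ≤ c) : maxDist k ζ x ≤ c :=
  Real.iSup_le (fun j => Real.iSup_le (h j) hc) hc

lemma maxDist_one : maxDist 1 ζ x = distNearestInt (ζ * x) := by
  refine le_antisymm (maxDist_le (distNearestInt_nonneg _) fun j hj => ?_) ?_
  · obtain rfl : j = 1 := by simp only [Finset.mem_Icc] at hj; omega
    rw [pow_one]
  · simpa using distNearestInt_le_maxDist (k := 1) (ζ := ζ) (x := x) (j := 1) (by simp)

lemma exists_distNearestInt_pos_of_maxDist_pos (h : 0 < maxDist k ζ x) :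
    ∃ j ∈ Finset.Icc 1 k, 0 < distNearestInt (ζ ^ j * x) := by
  by_contra! hc
  exact h.not_ge (maxDist_le le_rfl hc)

end maxDist

lemma EReal.coe_le_inv_of_le_coe_inv {a : ℝ} (ha : 0 < a) {L : EReal} (hL : 0 < L)
    (h : L ≤ (a⁻¹ : ℝ)) : (a : EReal) ≤ L⁻¹ := by
  have hainv : (0 : EReal) < (a⁻¹ : ℝ) := by exact_mod_cast inv_pos.2 ha
  simpa [← EReal.coe_inv] using EReal.inv_strictAntiOn.antitoneOn hL hainv h

def IsApproxExponent (k : ℕ) (ζ η : ℝ) : Prop :=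
  {x : ℕ | 0 < x ∧ 0 < maxDist k ζ x ∧ maxDist k ζ x ≤ (x : ℝ) ^ (-η)}.Infinite

def IsUniformApproxExponent (k : ℕ) (ζ η : ℝ) : Prop :=
  ∃ X₀ : ℝ, ∀ X : ℝ, X₀ ≤ X → ∃ x : ℕ, 1 ≤ x ∧ (x : ℝ) ≤ X ∧
    0 < maxDist k ζ x ∧ maxDist k ζ x ≤ X ^ (-η)

section approxExponent

variable {k : ℕ} {ζ η ν : ℝ}

lemma le_lambdaConst (h : IsApproxExponent k ζ η) : (η : EReal) ≤ lambdaConst k ζ :=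
  le_sSup (Set.mem_insert_of_mem _ ⟨η, rfl, h⟩)

lemma lambdaConst_le {c : ℝ} (hc : 0 ≤ c) (h : ∀ η, IsApproxExponent k ζ η → η ≤ c) :
    lambdaConst k ζ ≤ c :=
  sSup_le <| by
    rintro _ (rfl | ⟨η, rfl, hη⟩)
    exacts [EReal.coe_nonneg.2 hc, EReal.coe_le_coe_iff.2 (h η hη)]

lemma lambdaHatConst_le {c : EReal} (hc : 0 ≤ c)
    (h : ∀ η, IsUniformApproxExponent k ζ η → (η : EReal) ≤ c) : lambdaHatConst k ζ ≤ c :=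
  sSup_le <| by
    rintro _ (rfl | ⟨η, rfl, hη⟩)
    exacts [hc, h η hη]

lemma Rat.one_div_den_pow_le_distNearestInt (q : ℚ) {j k : ℕ} (hjk : j ≤ k) (x : ℕ)
    (h : 0 < distNearestInt ((q : ℝ) ^ j * x)) :
    1 / (q.den : ℝ) ^ k ≤ distNearestInt ((q : ℝ) ^ j * x) := by
  have hq : (q : ℝ) ^ j * x = ((q.num ^ j * q.den ^ (k - j) * x : ℤ) : ℝ) / (q.den ^ k : ℕ) := by
    have hden : (q.den : ℝ) ≠ 0 := by positivity
    have hsplit : (q.den : ℝ) ^ k = q.den ^ (k - j) * q.den ^ j := by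
      rw [← pow_add, Nat.sub_add_cancel hjk]
    rw [Rat.cast_def, div_pow]
    push_cast
    rw [hsplit]
    field_simp
  rw [hq] at h ⊢
  simpa using one_div_le_distNearestInt_div h

lemma irrational_of_isUniformApproxExponent (hη : 0 < η) (h : IsUniformApproxExponent k ζ η) :
    Irrational ζ := by
  rintro ⟨q, rfl⟩
  obtain ⟨X₀, hX⟩ := h
  obtain ⟨X, hX₀, hXsmall⟩ := ((eventually_ge_atTop X₀).and
    ((tendsto_rpow_neg_atTop hη).eventually_lt_const
      (by positivity : (0 : ℝ) < 1 / (q.den : ℝ) ^ k))).exists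
  obtain ⟨x, -, -, hpos, hle⟩ := hX X hX₀
  obtain ⟨j, hj, hjpos⟩ := exists_distNearestInt_pos_of_maxDist_pos hpos
  linarith [q.one_div_den_pow_le_distNearestInt (Finset.mem_Icc.1 hj).2 x hjpos,
    distNearestInt_le_maxDist (ζ := (q : ℝ)) (x := x) hj]

lemma isApproxExponent_one_of_isUniformApproxExponent (hk : 0 < k) (hη : 0 < η)
    (hirr : Irrational ζ) (h : IsUniformApproxExponent k ζ η) : IsApproxExponent 1 ζ η := by
  obtain ⟨X₀, hX⟩ := h
  refine Set.infinite_of_not_bddAbove fun ⟨N, hN⟩ => ?_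
  obtain ⟨ε, hε, hεle⟩ := hirr.exists_pos_le_distNearestInt_mul N
  obtain ⟨X, hX₀, hXε⟩ := ((eventually_ge_atTop X₀).and
    ((tendsto_rpow_neg_atTop hη).eventually_lt_const hε)).exists
  obtain ⟨x, hx1, hxX, -, hle⟩ := hX X hX₀
  have hζx : distNearestInt (ζ * x) ≤ X ^ (-η) := by
    simpa using (distNearestInt_le_maxDist (j := 1) (by simp; omega)).trans hle
  have hxN : x ≤ N := by
    refine hN ⟨hx1, ?_, ?_⟩ <;> rw [maxDist_one]
    · exact (hirr.mul_natCast (by omega)).distNearestInt_pos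
    · exact hζx.trans (Real.rpow_le_rpow_of_nonpos (by exact_mod_cast hx1) hxX (by linarith))
  linarith [hεle x hx1 hxN]

end approxExponent

lemma Irrational.exists_rat_den_gt_of_isApproxExponent {ζ ν : ℝ} (hirr : Irrational ζ)
    (hν : 0 < ν) (h : IsApproxExponent 1 ζ ν) (N : ℕ) :
    ∃ r : ℚ, N < r.den ∧ |ζ - r| ≤ (r.den : ℝ) ^ (-(1 + ν)) := by
  obtain ⟨ε, hε, hεle⟩ := hirr.exists_pos_le_distNearestInt_mul N
  obtain ⟨Y, hY⟩ := eventually_atTop.1 ((tendsto_rpow_neg_atTop hν).eventually_lt_const hε)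
  obtain ⟨y, ⟨hy0, -, hyν⟩, hYy⟩ := h.exists_gt ⌈Y⌉₊
  rw [maxDist_one] at hyν
  have hy : (0 : ℝ) < y := by exact_mod_cast hy0
  set r : ℚ := (round (ζ * y) : ℚ) / (y : ℤ)
  have hr : |ζ - r| * y = distNearestInt (ζ * y) := by
    rw [distNearestInt, ← abs_of_pos hy, ← abs_mul, abs_of_pos hy]
    push_cast [r]
    field_simp
  have hden_le : r.den ≤ y := by
    have : (r.den : ℤ) ∣ y := by simpa only [r, ← Rat.divInt_eq_div] using Rat.den_dvd _ _
    exact_mod_cast Int.le_of_dvd (by exact_mod_cast hy0) this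
  have hden : (0 : ℝ) < r.den := by exact_mod_cast r.pos
  refine ⟨r, ?_, ?_⟩
  · by_contra! hN
    have hclose : distNearestInt (ζ * r.den) ≤ |ζ - r| * r.den := by
      calc distNearestInt (ζ * r.den) ≤ |ζ * r.den - r.num| :=
            distNearestInt_le_abs_sub_intCast _ _
        _ = |ζ - r| * r.den := by
            rw [← abs_of_pos hden, ← abs_mul, abs_of_pos hden, Rat.cast_def]
            field_simp
    have hY' : Y ≤ y := (Nat.le_ceil Y).trans (by exact_mod_cast hYy.le)
    have := hεle r.den r.pos hN
    have : |ζ - r| * r.den ≤ |ζ - r| * y :=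
      mul_le_mul_of_nonneg_left (by exact_mod_cast hden_le) (abs_nonneg _)
    linarith [hY y hY']
  · calc |ζ - r| = |ζ - r| * y / y := by field_simp
      _ ≤ (y : ℝ) ^ (-ν) / y := by rw [hr]; gcongr
      _ = (y : ℝ) ^ (-(1 + ν)) := by
          rw [neg_add, Real.rpow_add hy, Real.rpow_neg_one]; ring
      _ ≤ (r.den : ℝ) ^ (-(1 + ν)) :=
          Real.rpow_le_rpow_of_nonpos hden (by exact_mod_cast hden_le) (by linarith)

lemma abs_pow_sub_pow_le_of_abs_sub_le {u v δ : ℝ} (hδ : |u - v| ≤ δ) (hδ1 : δ ≤ 1) {n k : ℕ}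
    (hn : n ≤ k) : |u ^ n - v ^ n| ≤ k * (|v| + 1) ^ k * δ := by
  have hmax : max |u| |v| ≤ |v| + 1 := by
    refine max_le ?_ (by linarith)
    linarith [abs_sub_abs_le_abs_sub u v]
  have hpow : max |u| |v| ^ (n - 1) ≤ (|v| + 1) ^ k :=
    calc max |u| |v| ^ (n - 1) ≤ (|v| + 1) ^ (n - 1) := by gcongr
      _ ≤ (|v| + 1) ^ k := pow_le_pow_right₀ (by linarith [abs_nonneg v]) (by omega)
  calc |u ^ n - v ^ n| ≤ |u - v| * n * max |u| |v| ^ (n - 1) := abs_pow_sub_pow_le u v n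
    _ ≤ δ * k * (|v| + 1) ^ k := by
        have hδ0 : 0 ≤ δ := (abs_nonneg _).trans hδ
        gcongr
    _ = k * (|v| + 1) ^ k * δ := by ring

lemma Rat.den_pow_dvd_of_maxDist_le {ζ δ ε : ℝ} {r : ℚ} {k x : ℕ} (hδ : |(r : ℝ) - ζ| ≤ δ)
    (hδ1 : δ ≤ 1) (hx : maxDist k ζ x ≤ ε)
    (hsmall : k * (|ζ| + 1) ^ k * δ * x + ε < 1 / r.den) : r.den ^ k ∣ x := by
  have hden : (0 : ℝ) < r.den := by exact_mod_cast r.pos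
  suffices ∀ j ≤ k, r.den ^ j ∣ x from this k le_rfl
  intro j
  induction j with
  | zero => simp
  | succ j ih =>
    intro hjk
    obtain ⟨m, rfl⟩ := ih (by omega)
    have hrat : (r : ℝ) ^ (j + 1) * ((r.den ^ j * m : ℕ) : ℝ) =
        ((r.num ^ (j + 1) * m : ℤ) : ℝ) / r.den := by
      rw [Rat.cast_def, div_pow]
      push_cast
      field_simp
      ring
    have hdist : distNearestInt (((r.num ^ (j + 1) * m : ℤ) : ℝ) / r.den) < 1 / r.den := by
      rw [← hrat]
      calc _ ≤ distNearestInt (ζ ^ (j + 1) * ((r.den ^ j * m : ℕ) : ℝ)) +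
            |(r : ℝ) ^ (j + 1) * ((r.den ^ j * m : ℕ) : ℝ) -
              ζ ^ (j + 1) * ((r.den ^ j * m : ℕ) : ℝ)| := distNearestInt_le_add_abs_sub _ _
        _ ≤ ε + k * (|ζ| + 1) ^ k * δ * ((r.den ^ j * m : ℕ) : ℝ) := by
            rw [← sub_mul, abs_mul, Nat.abs_cast]
            gcongr
            · exact (distNearestInt_le_maxDist (by simp; omega)).trans hx
            · exact abs_pow_sub_pow_le_of_abs_sub_le hδ hδ1 hjk
        _ < 1 / r.den := by linarith
    have hcop : IsCoprime (r.den : ℤ) (r.num ^ (j + 1)) :=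
      (Int.isCoprime_iff_nat_coprime.2 (by simpa using r.reduced.symm)).pow_right
    obtain ⟨m', rfl⟩ : r.den ∣ m := by
      exact_mod_cast hcop.dvd_of_dvd_mul_left (natCast_dvd_of_distNearestInt_div_lt r.pos hdist)
    exact ⟨m', by ring⟩

lemma eventually_mul_rpow_mul_rpow_add_rpow_lt_one_div (C : ℝ) {θ η ν : ℝ} (hθν : θ < ν)
    (hθη : 1 < θ * η) :
    ∀ᶠ t : ℝ in atTop, C * t ^ (-(1 + ν)) * t ^ θ + (t ^ θ) ^ (-η) < 1 / t := by
  have hlim : Tendsto (fun t : ℝ => C * t ^ (θ - ν) + t ^ (1 - θ * η)) atTop (nhds 0) := by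
    simpa using ((tendsto_rpow_neg_atTop (y := ν - θ) (by linarith)).const_mul C).add
      (tendsto_rpow_neg_atTop (y := θ * η - 1) (by linarith))
  filter_upwards [hlim.eventually_lt_const one_pos, eventually_gt_atTop 0] with t hlt ht
  have e1 : t ^ (θ - ν) = t ^ (-(1 + ν)) * t ^ θ * t := by
    rw [← Real.rpow_add ht, ← Real.rpow_add_one ht.ne']; congr 1; ring
  have e2 : t ^ (1 - θ * η) = (t ^ θ) ^ (-η) * t := by
    rw [← Real.rpow_mul ht.le, ← Real.rpow_add_one ht.ne']; congr 1; ring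
  calc C * t ^ (-(1 + ν)) * t ^ θ + (t ^ θ) ^ (-η) = (C * t ^ (θ - ν) + t ^ (1 - θ * η)) / t := by
        rw [e1, e2]; field_simp
    _ < 1 / t := by gcongr

lemma le_inv_of_isUniformApproxExponent {k : ℕ} {ζ η ν : ℝ} (hk : 0 < k) (hirr : Irrational ζ)
    (hηk : (k : ℝ)⁻¹ < η) (hU : IsUniformApproxExponent k ζ η) (hν : IsApproxExponent 1 ζ ν) :
    ν ≤ η⁻¹ := by
  by_contra! hνη
  have hk' : (0 : ℝ) < k := by exact_mod_cast hk
  have hη : 0 < η := (inv_pos.2 hk').trans hηk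
  obtain ⟨θ, hηθ, hθ⟩ := exists_between (lt_min hνη ((inv_lt_comm₀ hk' hη).1 hηk))
  have hθν : θ < ν := hθ.trans_le (min_le_left _ _)
  have hθk : θ < k := hθ.trans_le (min_le_right _ _)
  have hν0 : 0 < ν := (inv_pos.2 hη).trans hνη
  have hθη : 1 < θ * η := by rwa [inv_lt_iff_one_lt_mul₀ hη] at hηθ
  obtain ⟨X₀, hX⟩ := hU
  obtain ⟨B, hB⟩ := eventually_atTop.1
    (((tendsto_rpow_atTop ((inv_pos.2 hη).trans hηθ)).eventually_ge_atTop X₀).and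
      ((eventually_mul_rpow_mul_rpow_add_rpow_lt_one_div (k * (|ζ| + 1) ^ k) hθν hθη).and
        (eventually_gt_atTop 1)))
  obtain ⟨r, hrB, hr⟩ := hirr.exists_rat_den_gt_of_isApproxExponent hν0 hν ⌈B⌉₊
  set b : ℝ := (r.den : ℝ) with hb_def
  obtain ⟨hX₀b, hsmall, hb1⟩ :=
    hB b ((Nat.le_ceil B).trans (by rw [hb_def]; exact_mod_cast hrB.le))
  obtain ⟨x, hx1, hxX, -, hxη⟩ := hX (b ^ θ) hX₀b
  have hdvd : r.den ^ k ∣ x := by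
    refine Rat.den_pow_dvd_of_maxDist_le (δ := b ^ (-(1 + ν))) (by rwa [abs_sub_comm])
      (Real.rpow_le_one_of_one_le_of_nonpos hb1.le (by linarith)) hxη (lt_of_le_of_lt ?_ hsmall)
    gcongr
  have hbk : b ^ k ≤ x := by rw [hb_def]; exact_mod_cast Nat.le_of_dvd hx1 hdvd
  have hθk' : b ^ θ < b ^ k := by
    simpa using Real.rpow_lt_rpow_of_exponent_lt hb1 hθk
  linarith

theorem stmt7 (k : ℕ) (hk : 0 < k) (ζ : ℝ) :
    lambdaHatConst k ζ ≤ max (((k : ℝ) : EReal))⁻¹ (lambdaConst 1 ζ)⁻¹ := by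
  have hk0 : (0 : EReal) ≤ ((k : ℝ) : EReal)⁻¹ := EReal.inv_nonneg_of_nonneg (by positivity)
  refine lambdaHatConst_le (hk0.trans (le_max_left _ _)) fun η hU => ?_
  rcases le_or_gt η (k : ℝ)⁻¹ with hηk | hηk
  · exact le_max_of_le_left (by rw [← EReal.coe_inv]; exact_mod_cast hηk)
  have hη : 0 < η := (inv_pos.2 (by exact_mod_cast hk)).trans hηk
  have hirr : Irrational ζ := irrational_of_isUniformApproxExponent hη hU
  -- `hlow` excludes `λ₁(ζ) = 0`, since `0⁻¹ = 0` in `EReal`.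
  have hlow : (η : EReal) ≤ lambdaConst 1 ζ :=
    le_lambdaConst (isApproxExponent_one_of_isUniformApproxExponent hk hη hirr hU)
  have hup : lambdaConst 1 ζ ≤ (η⁻¹ : ℝ) := lambdaConst_le (inv_nonneg.2 hη.le) fun ν hν =>
    le_inv_of_isUniformApproxExponent hk hirr hηk hU hν
  exact le_max_of_le_right
    (EReal.coe_le_inv_of_le_coe_inv hη ((EReal.coe_pos.2 hη).trans_le hlow) hup)
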